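/- Let A ∈ ℤ^{n×n} be nonsingular with Smith form S = diag(s_1,…,s_n), and let M ∈ ℤ^{n×n} be a Smith massager for A. Then a matrix H ∈ ℤ^{n×n} is left equivalent to A (that is, H = UA for some unimodular U ∈ ℤ^{n×n}) if and only if |det H| = det S and HM ≡ 0 (colmod S). -/

import Mathlib

open Matrix

/-- A square integer matrix is unimodular if its determinant is `±1`. -/
def IsUnimodular {ι : Type*} [Fintype ι] [DecidableEq ι] (U : Matrix ι ι ℤ) : Prop :=
  U.det = 1 ∨ U.det = -1

/-- `S` is a Smith form of `A`: it is diagonal with positive diagonal entries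
forming a divisibility chain, and `P * A * Q = S` for some unimodular `P`, `Q`. -/
def IsSmithForm {n : ℕ} (A S : Matrix (Fin n) (Fin n) ℤ) : Prop :=
  (∀ i j : Fin n, i ≠ j → S i j = 0) ∧ (∀ i, 0 < S i i) ∧
  (∀ i j : Fin n, i ≤ j → S i i ∣ S j j) ∧
  ∃ P Q : Matrix (Fin n) (Fin n) ℤ, IsUnimodular P ∧ IsUnimodular Q ∧ P * A * Q = S

/-- `B ≡ C (colmod S)`: column `j` of `B` is congruent to column `j` of `C`
modulo the `j`-th diagonal entry of `S`. -/
def ColMod {ι : Type*} [Fintype ι] (S B C : Matrix ι ι ℤ) : Prop :=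
  ∀ i j, S j j ∣ (B i j - C i j)

/-- `M` is a Smith massager for `A` (with Smith form `S`):
`A * M ≡ 0 (colmod S)` and `W * M ≡ I (colmod S)` for some integer matrix `W`. -/
def IsSmithMassager {ι : Type*} [Fintype ι] [DecidableEq ι] (A S M : Matrix ι ι ℤ) : Prop :=
  ColMod S (A * M) 0 ∧ ∃ W : Matrix ι ι ℤ, ColMod S (W * M) 1

/-! Write `P * A * Q = S`. A row vector `y` is a row of some `X * A` as soon as every `(y ᵥ* Q) j`
is divisible by `s_j`, i.e. as soon as `y` lies in the kernel of `π : y ↦ (y ᵥ* Q mod s_j)_j`.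
The massager gives a second homomorphism `ψ : y ↦ (y ᵥ* M mod s_j)_j` onto the same finite group
`∏ ℤ/s_j` (onto because `W * M ≡ 1`), and `A * M ≡ 0` says `ker π ≤ ker ψ`. Two surjections onto
a finite group with nested kernels have equal kernels, so `H * M ≡ 0` forces `H = X * A`, and
comparing determinants makes `X` unimodular. -/

theorem AddMonoidHom.ker_le_ker_of_surjective {G F : Type*} [AddGroup G] [AddGroup F] [Finite F]
    {π ψ : G →+ F} (hπ : Function.Surjective π) (hψ : Function.Surjective ψ)
    (hle : π.ker ≤ ψ.ker) : ψ.ker ≤ π.ker := by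
  have hindex : ∀ f : G →+ F, Function.Surjective f → f.ker.index = Nat.card F := fun f hf => by
    rw [AddSubgroup.index_ker, f.range_eq_top.mpr hf, AddSubgroup.card_top]
  have hrel := AddSubgroup.relIndex_mul_index hle
  rw [hindex π hπ, hindex ψ hψ] at hrel
  exact AddSubgroup.relIndex_eq_one.mp ((Nat.mul_eq_right Nat.card_pos.ne').mp hrel)

theorem isUnimodular_iff_isUnit_det {ι : Type*} [Fintype ι] [DecidableEq ι] {U : Matrix ι ι ℤ} :
    IsUnimodular U ↔ IsUnit U.det :=
  Int.isUnit_iff.symm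

theorem isUnimodular_iff_abs_det {ι : Type*} [Fintype ι] [DecidableEq ι] {U : Matrix ι ι ℤ} :
    IsUnimodular U ↔ |U.det| = 1 :=
  isUnimodular_iff_isUnit_det.trans Int.isUnit_iff_abs_eq

namespace ColMod

variable {ι : Type*} [Fintype ι]

theorem mul_left {S B C : Matrix ι ι ℤ} (h : ColMod S B C) (X : Matrix ι ι ℤ) :
    ColMod S (X * B) (X * C) := fun i j => by
  simpa only [mul_apply, ← Finset.sum_sub_distrib, ← mul_sub] using
    Finset.dvd_sum fun k _ => (h k j).mul_left (X i k)

end ColMod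

section Residues

variable {ι : Type*}

def residues (d : ι → ℤ) : (ι → ℤ) →+ ((j : ι) → ZMod (d j).natAbs) :=
  AddMonoidHom.pi fun j => (Int.castAddHom _).comp (Pi.evalAddMonoidHom _ j)

theorem residues_apply (d y : ι → ℤ) (j : ι) : residues d y j = (y j : ZMod _) := rfl

theorem residues_eq_residues_iff {d y z : ι → ℤ} :
    residues d y = residues d z ↔ ∀ j, d j ∣ y j - z j := by
  simp only [funext_iff, residues_apply, ZMod.intCast_eq_intCast_iff_dvd_sub, Int.natAbs_dvd,
    dvd_sub_comm]

theorem residues_eq_zero_iff {d y : ι → ℤ} : residues d y = 0 ↔ ∀ j, d j ∣ y j := by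
  simpa using residues_eq_residues_iff (d := d) (y := y) (z := 0)

theorem residues_surjective (d : ι → ℤ) : Function.Surjective (residues d) :=
  fun t => ⟨fun j => (t j).cast, funext fun j => ZMod.intCast_zmod_cast (t j)⟩

variable [Fintype ι]

theorem residues_vecMul_eq_of_colMod {S B C : Matrix ι ι ℤ} (h : ColMod S B C) (x : ι → ℤ) :
    residues S.diag (x ᵥ* B) = residues S.diag (x ᵥ* C) := by
  refine residues_eq_residues_iff.mpr fun j => ?_
  rw [← Pi.sub_apply, ← vecMul_sub]
  exact Finset.dvd_sum fun i _ => (h i j).mul_left (x i)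

end Residues

section RowLattice

variable {ι : Type*} [Fintype ι] [DecidableEq ι]

theorem exists_eq_vecMul_of_dvd {A P Q : Matrix ι ι ℤ} {d : ι → ℤ}
    (hPAQ : P * A * Q = diagonal d) (hQ : IsUnit Q.det) {y : ι → ℤ}
    (hy : ∀ j, d j ∣ (y ᵥ* Q) j) : ∃ x, y = x ᵥ* A := by
  choose z hz using hy
  refine ⟨z ᵥ* P, ?_⟩
  have hyQ : y ᵥ* Q = z ᵥ* diagonal d := funext fun j => by rw [vecMul_diagonal, hz, mul_comm]
  calc y = y ᵥ* Q ᵥ* Q⁻¹ := by rw [vecMul_vecMul, mul_nonsing_inv Q hQ, vecMul_one]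
    _ = z ᵥ* P ᵥ* A := by
      rw [hyQ, ← hPAQ, vecMul_vecMul, vecMul_vecMul, Matrix.mul_assoc _ Q, mul_nonsing_inv Q hQ,
        Matrix.mul_one]

theorem exists_eq_mul_of_colMod_zero {A S M H P Q : Matrix ι ι ℤ} (hS : S.IsDiag)
    (hS0 : ∀ j, S j j ≠ 0) (hPAQ : P * A * Q = S) (hQ : IsUnit Q.det)
    (hM : IsSmithMassager A S M) (hHM : ColMod S (H * M) 0) : ∃ X, H = X * A := by
  obtain ⟨hAM, W, hWM⟩ := hM
  have : ∀ j, NeZero (S.diag j).natAbs := fun j => ⟨Int.natAbs_ne_zero.mpr (hS0 j)⟩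
  let π := (residues S.diag).comp (vecMulLinear Q).toAddMonoidHom
  let ψ := (residues S.diag).comp (vecMulLinear M).toAddMonoidHom
  have hπ : Function.Surjective π := (residues_surjective _).comp
    (vecMul_surjective_iff_isUnit.mpr ((isUnit_iff_isUnit_det Q).mpr hQ))
  have hψ : Function.Surjective ψ := fun t => by
    obtain ⟨x, rfl⟩ := residues_surjective _ t
    refine ⟨x ᵥ* W, ?_⟩
    change residues _ (x ᵥ* W ᵥ* M) = _
    rw [vecMul_vecMul, residues_vecMul_eq_of_colMod hWM, vecMul_one]
  have hPAQd : P * A * Q = diagonal S.diag := hPAQ.trans hS.diagonal_diag.symm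
  have hle : π.ker ≤ ψ.ker := fun y hy => by
    obtain ⟨x, rfl⟩ := exists_eq_vecMul_of_dvd hPAQd hQ (residues_eq_zero_iff.mp hy)
    change residues _ (x ᵥ* A ᵥ* M) = 0
    rw [vecMul_vecMul, residues_vecMul_eq_of_colMod hAM, vecMul_zero, map_zero]
  have hrow : ∀ i, ∃ x, H i = x ᵥ* A := fun i => by
    refine exists_eq_vecMul_of_dvd hPAQd hQ (residues_eq_zero_iff.mp
      (AddMonoidHom.ker_le_ker_of_surjective hπ hψ hle (residues_eq_zero_iff.mpr fun j => ?_)))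
    simpa [ColMod, ← mul_apply_eq_vecMul] using hHM i j
  choose X hX using hrow
  exact ⟨Matrix.of X, funext fun i => by rw [hX i, mul_apply_eq_vecMul]; rfl⟩

end RowLattice

namespace IsSmithForm

variable {n : ℕ} {A S : Matrix (Fin n) (Fin n) ℤ}

theorem isDiag (h : IsSmithForm A S) : S.IsDiag := fun _ _ hij => h.1 _ _ hij

theorem det_pos (h : IsSmithForm A S) : 0 < S.det := by
  rw [← h.isDiag.diagonal_diag, det_diagonal]
  exact Finset.prod_pos fun j _ => h.2.1 j

theorem abs_det (h : IsSmithForm A S) : |A.det| = S.det := by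
  obtain ⟨P, Q, hP, hQ, hPAQ⟩ := h.2.2.2
  calc |A.det| = |(P * A * Q).det| := by
        rw [det_mul, det_mul, abs_mul, abs_mul, isUnimodular_iff_abs_det.mp hP,
          isUnimodular_iff_abs_det.mp hQ, one_mul, mul_one]
    _ = S.det := by rw [hPAQ, abs_of_pos h.det_pos]

end IsSmithForm

theorem leftEquivalent_iff_det_and_colmod_general {n : ℕ}
    (A S M : Matrix (Fin n) (Fin n) ℤ)
    (hS : IsSmithForm A S) (hM : IsSmithMassager A S M)
    (H : Matrix (Fin n) (Fin n) ℤ) :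
    (∃ U : Matrix (Fin n) (Fin n) ℤ, IsUnimodular U ∧ H = U * A) ↔
    (|H.det| = S.det ∧ ColMod S (H * M) 0) := by
  have hA : |A.det| = S.det := hS.abs_det
  constructor
  · rintro ⟨U, hU, rfl⟩
    refine ⟨by rw [det_mul, abs_mul, isUnimodular_iff_abs_det.mp hU, one_mul, hA], ?_⟩
    simpa only [Matrix.mul_assoc, Matrix.mul_zero] using hM.1.mul_left U
  · rintro ⟨hdet, hHM⟩
    obtain ⟨P, Q, -, hQ, hPAQ⟩ := hS.2.2.2
    obtain ⟨X, rfl⟩ := exists_eq_mul_of_colMod_zero hS.isDiag (fun j => (hS.2.1 j).ne') hPAQ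
      (isUnimodular_iff_isUnit_det.mp hQ) hM hHM
    refine ⟨X, isUnimodular_iff_abs_det.mpr (mul_right_cancel₀ hS.det_pos.ne' ?_), rfl⟩
    rw [one_mul, ← hA, ← abs_mul, ← det_mul, hdet, hA]

/-- `H` is left equivalent to `A` iff `|det H| = det S` and `H M ≡ 0 (colmod S)`. -/
theorem leftEquivalent_iff_det_and_colmod {n : ℕ}
    (A S M : Matrix (Fin n) (Fin n) ℤ) (hA : A.det ≠ 0)
    (hS : IsSmithForm A S) (hM : IsSmithMassager A S M)
    (H : Matrix (Fin n) (Fin n) ℤ) :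
    (∃ U : Matrix (Fin n) (Fin n) ℤ, IsUnimodular U ∧ H = U * A) ↔
    (|H.det| = S.det ∧ ColMod S (H * M) 0) :=
  leftEquivalent_iff_det_and_colmod_general A S M hS hM H
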